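/- arXiv:2002.00586 — 7 statements merged into one kernel-verified Lean document; each statement's English description precedes it below -/
import Mathlib

section
/- For real constants D > 0, W > 0 and k > 0, the function E(P) = D·P / (W·logb 2 (1 + k·P)) is strictly increasing on the interval (0, ∞). (Equivalently, the energy required to transmit a fixed amount of data D at rate W·logb 2 (1+kP) over time D/(W·logb 2 (1+kP)) is a strictly increasing function of the transmit power P.) -/
/-!
Up to the positive factor `D · log 2 / W`, the energy is the reciprocal of `log (1 + k P) / P`,
the slope of the chord from `0` to `P` of the strictly concave function `P ↦ log (1 + k P)`,
which vanishes at `0`; such chord slopes strictly decrease in `P`.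
-/

open Real Set

theorem StrictConcaveOn.div_strictAntiOn_Ioi {𝕜 : Type*} [Field 𝕜] [LinearOrder 𝕜]
    [IsStrictOrderedRing 𝕜] {f : 𝕜 → 𝕜} (hf : StrictConcaveOn 𝕜 (Ici 0) f) (h0 : f 0 = 0) :
    StrictAntiOn (fun x => f x / x) (Ioi 0) := fun x hx y hy hxy => by
  simpa [h0] using hf.secant_strict_mono self_mem_Ici (Ioi_subset_Ici_self hx)
    (Ioi_subset_Ici_self hy) hx.ne' (ne_of_gt hy) hxy

theorem strictConcaveOn_log_one_add_mul {k : ℝ} (hk : 0 < k) :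
    StrictConcaveOn ℝ (Ici 0) (fun P => log (1 + k * P)) := by
  refine ⟨convex_Ici 0, fun x hx y hy hxy a b ha hb hab => ?_⟩
  have hx' : 0 < 1 + k * x := by have := mul_nonneg hk.le (mem_Ici.1 hx); linarith
  have hy' : 0 < 1 + k * y := by have := mul_nonneg hk.le (mem_Ici.1 hy); linarith
  have hne : 1 + k * x ≠ 1 + k * y := by simpa [hk.ne'] using hxy
  convert strictConcaveOn_log_Ioi.2 hx' hy' hne ha hb hab using 2
  simp only [smul_eq_mul]
  linear_combination (-1 : ℝ) * hab

theorem log_one_add_mul_div_strictAntiOn {k : ℝ} (hk : 0 < k) :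
    StrictAntiOn (fun P => log (1 + k * P) / P) (Ioi 0) :=
  (strictConcaveOn_log_one_add_mul hk).div_strictAntiOn_Ioi (by simp)

/-- For real constants `D > 0`, `W > 0` and `k > 0`, the energy
`E(P) = D·P / (W·logb 2 (1 + k·P))` required to transmit `D` bits at power `P`
is a strictly increasing function of the transmit power `P` on `(0, ∞)`. -/
theorem energy_strictMonoOn (D W k : ℝ) (hD : 0 < D) (hW : 0 < W) (hk : 0 < k) :
    StrictMonoOn (fun P : ℝ => D * P / (W * Real.logb 2 (1 + k * P))) (Set.Ioi 0) := by
  have hrate : ∀ P ∈ Ioi (0 : ℝ), 0 < log (1 + k * P) / P := fun P hP =>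
    div_pos (log_pos (by nlinarith [mem_Ioi.1 hP])) hP
  have henergy : ∀ P ∈ Ioi (0 : ℝ),
      D * P / (W * logb 2 (1 + k * P)) = D * log 2 / W / (log (1 + k * P) / P) := by
    intro P hP
    have := (hrate P hP).ne'
    simp only [logb]
    field_simp
  intro a ha b hb hab
  simp only [henergy a ha, henergy b hb]
  exact div_lt_div_of_pos_left (by positivity) (hrate b hb)
    (log_one_add_mul_div_strictAntiOn hk ha hb hab)
end

section
/- (Lemma 1: no initial waiting time.) Let B ≥ 0, C ≥ 0, D > 0, W > 0, k > 0 and Pmax > 0. Suppose τ0 > 0, τ1 > 0 and 0 < P1 ≤ Pmax satisfy the data constraint W·τ1·logb 2 (1 + k·P1) ≥ D and the energy causality constraint P1·τ1 ≤ B + C·(τ0 + τ1). Then there exists P1' with 0 < P1' < P1 such that W·(τ0 + τ1)·logb 2 (1 + k·P1') ≥ D and P1'·(τ0 + τ1) < B + C·(τ0 + τ1). In particular, absorbing the initial energy-harvesting waiting time τ0 into the transmission slot remains feasible without increasing the completion time, so the optimal initial waiting time is τ0 = 0. -/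
/-!
Spread the transmission over the whole interval `T = τ0 + τ1` with the power `P'` for which
`1 + k P' = (1 + k P1) ^ θ`, `θ = τ1 / T`: then `T log(1 + k P') = τ1 log(1 + k P1)`, so exactly the
same number of bits is delivered. By strict concavity of `x ↦ x ^ θ` (Bernoulli's inequality),
`P' < θ P1`, hence `P' T < P1 τ1`, which is within the energy budget, and `P' < P1`.
-/

open Real

/-- The power which, over a slot longer by the factor `1 / θ`, delivers the same Shannon
throughput `log (1 + k P)` as the power `P`. -/
noncomputable def equalThroughputPower (k P θ : ℝ) : ℝ := ((1 + k * P) ^ θ - 1) / k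

section equalThroughputPower

variable {k P θ : ℝ}

theorem one_add_mul_equalThroughputPower (hk : k ≠ 0) :
    1 + k * equalThroughputPower k P θ = (1 + k * P) ^ θ := by
  rw [equalThroughputPower, mul_div_cancel₀ _ hk]
  ring

theorem logb_one_add_mul_equalThroughputPower (b : ℝ) (hk : k ≠ 0) (hkP : 0 < 1 + k * P) :
    logb b (1 + k * equalThroughputPower k P θ) = θ * logb b (1 + k * P) := by
  rw [one_add_mul_equalThroughputPower hk, logb_rpow_eq_mul_logb_of_pos hkP]

theorem equalThroughputPower_pos (hk : 0 < k) (hP : 0 < P) (hθ : 0 < θ) :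
    0 < equalThroughputPower k P θ := by
  have hbase : 1 < 1 + k * P := by nlinarith
  exact div_pos (sub_pos.2 (one_lt_rpow hbase hθ)) hk

theorem equalThroughputPower_lt_mul (hk : 0 < k) (hP : 0 < P) (hθ₀ : 0 < θ) (hθ₁ : θ < 1) :
    equalThroughputPower k P θ < θ * P := by
  have hkP : 0 < k * P := mul_pos hk hP
  have bernoulli : (1 + k * P) ^ θ < 1 + θ * (k * P) :=
    rpow_one_add_lt_one_add_mul_self (by linarith) hkP.ne' hθ₀ hθ₁
  rw [equalThroughputPower, div_lt_iff₀ hk]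
  linarith

end equalThroughputPower

theorem no_initial_waiting_general (B C D W k τ0 τ1 P1 : ℝ)
    (hk : 0 < k)
    (hτ0 : 0 < τ0) (hτ1 : 0 < τ1) (hP1 : 0 < P1)
    (hdata : W * τ1 * Real.logb 2 (1 + k * P1) ≥ D)
    (henergy : P1 * τ1 ≤ B + C * (τ0 + τ1)) :
    ∃ P1' : ℝ, 0 < P1' ∧ P1' < P1 ∧
      W * (τ0 + τ1) * Real.logb 2 (1 + k * P1') ≥ D ∧
      P1' * (τ0 + τ1) < B + C * (τ0 + τ1) := by
  set T := τ0 + τ1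
  have hT : 0 < T := by positivity
  set θ := τ1 / T
  have hθ₀ : 0 < θ := div_pos hτ1 hT
  have hθ₁ : θ < 1 := (div_lt_one hT).2 (by linarith)
  have hθT : θ * T = τ1 := div_mul_cancel₀ τ1 hT.ne'
  have hlt := equalThroughputPower_lt_mul hk hP1 hθ₀ hθ₁
  refine ⟨equalThroughputPower k P1 θ, equalThroughputPower_pos hk hP1 hθ₀,
    hlt.trans (mul_lt_of_lt_one_left hP1 hθ₁), ?_, ?_⟩
  · rw [logb_one_add_mul_equalThroughputPower 2 hk.ne' (by nlinarith)]
    calc W * T * (θ * logb 2 (1 + k * P1)) = W * (θ * T) * logb 2 (1 + k * P1) := by ring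
      _ ≥ D := by rwa [hθT]
  · calc equalThroughputPower k P1 θ * T < θ * P1 * T := mul_lt_mul_of_pos_right hlt hT
      _ = P1 * τ1 := by rw [← hθT]; ring
      _ ≤ B + C * T := henergy

/-- Lemma 1 (no initial waiting time): if a user can transmit its data `D` in time `τ1`
with power `0 < P1 ≤ Pmax` after waiting `τ0` to harvest energy, then it can instead
transmit over the whole interval `τ0 + τ1` with a strictly smaller power `P1'`,
still meeting its data demand and strictly satisfying the energy causality constraint.
Hence the optimal initial waiting time is `τ0 = 0`. -/
theorem no_initial_waiting (B C D W k Pmax τ0 τ1 P1 : ℝ)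
    (hB : 0 ≤ B) (hC : 0 ≤ C) (hD : 0 < D) (hW : 0 < W) (hk : 0 < k) (hPmax : 0 < Pmax)
    (hτ0 : 0 < τ0) (hτ1 : 0 < τ1) (hP1 : 0 < P1) (hP1le : P1 ≤ Pmax)
    (hdata : W * τ1 * Real.logb 2 (1 + k * P1) ≥ D)
    (henergy : P1 * τ1 ≤ B + C * (τ0 + τ1)) :
    ∃ P1' : ℝ, 0 < P1' ∧ P1' < P1 ∧
      W * (τ0 + τ1) * Real.logb 2 (1 + k * P1') ≥ D ∧
      P1' * (τ0 + τ1) < B + C * (τ0 + τ1) :=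
  no_initial_waiting_general B C D W k τ0 τ1 P1 hk hτ0 hτ1 hP1 hdata henergy
end

section
/- (Lemma 2: data constraints are tight at the optimum.) Consider the power control and time allocation problem PCP with N users: given constants W > 0, Pmax > 0 and, for each i ∈ {1,…,N}, D_i > 0, k_i > 0, B_i ≥ 0, C_i ≥ 0, the feasible set F consists of all pairs of vectors (τ, α) ∈ ℝ^N × ℝ^N with, for every i: τ_i > 0, α_i ≥ 0, W·τ_i·logb 2 (1 + k_i·α_i/τ_i) ≥ D_i (data constraint), α_i ≤ τ_i·Pmax (maximum power constraint), and α_i ≤ B_i + C_i·Σ_{j=1}^{i} τ_j (energy causality constraint). Assume F contains a Slater point, i.e., a feasible point at which all three inequality constraints of every user hold strictly. If (τ*, α*) ∈ F minimizes Σ_{i=1}^{N} τ_i over F, then for every i ∈ {1,…,N} the data constraint is satisfied with equality: W·τ*_i·logb 2 (1 + k_i·α*_i/τ*_i) = D_i. -/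
/-!
If user `i` has slack in its data constraint, shrink its slot and its energy by the common factor
`θ < 1` that makes the constraint tight: its power is unchanged and, as it harvests for a shorter
time but also spends less, energy causality survives. Hand the freed time to user `i + 1`. All
later slots end where they did before, so no other energy constraint moves, while the data volume
`τ log (1 + k α / τ)` of user `i + 1` grows strictly in `τ` (concavity of `log`): user `i + 1` is
now slack. Pushing the slack down to the last user and shrinking it there shortens the schedule,
contradicting optimality.
-/

open Finset Real

lemma strictMonoOn_mul_log_one_add_div {a : ℝ} (ha : 0 < a) :
    StrictMonoOn (fun τ => τ * log (1 + a / τ)) (Set.Ioi 0) := by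
  intro τ (hτ : 0 < τ) τ' (hτ' : 0 < τ') h
  -- `τ * log (1 + a / τ)` is `a` times the slope of `log` between `1` and `1 + a / τ`
  have key := strictConcaveOn_log_Ioi.secant_strict_mono (a := 1) (x := 1 + a / τ')
    (y := 1 + a / τ) (Set.mem_Ioi.2 one_pos) (Set.mem_Ioi.2 (by positivity))
    (Set.mem_Ioi.2 (by positivity)) (by simp [ha.ne', hτ'.ne']) (by simp [ha.ne', hτ.ne'])
    (by gcongr)
  simp only [log_one, sub_zero, add_sub_cancel_left, div_div_eq_mul_div] at key
  simpa [mul_comm] using (div_lt_div_iff_of_pos_right ha).1 key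

noncomputable def dataVolume (W k τ α : ℝ) : ℝ :=
  W * τ * logb 2 (1 + k * α / τ)

section dataVolume

variable {W k τ α : ℝ}

@[simp]
lemma dataVolume_zero_right : dataVolume W k τ 0 = 0 := by
  simp [dataVolume]

lemma dataVolume_mul_mul {θ : ℝ} (hθ : θ ≠ 0) :
    dataVolume W k (θ * τ) (θ * α) = θ * dataVolume W k τ α := by
  rw [dataVolume, dataVolume, mul_left_comm k, mul_div_mul_left _ _ hθ]
  ring

lemma dataVolume_lt_dataVolume (hW : 0 < W) (hk : 0 < k) (hα : 0 < α) (hτ : 0 < τ)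
    {τ' : ℝ} (h : τ < τ') : dataVolume W k τ α < dataVolume W k τ' α := by
  have hmono := strictMonoOn_mul_log_one_add_div (mul_pos hk hα) hτ (hτ.trans h) h
  have hW2 : 0 < W / log 2 := div_pos hW (log_pos one_lt_two)
  calc dataVolume W k τ α = W / log 2 * (τ * log (1 + k * α / τ)) := by
        rw [dataVolume, logb]; ring
    _ < W / log 2 * (τ' * log (1 + k * α / τ')) := mul_lt_mul_of_pos_left hmono hW2
    _ = dataVolume W k τ' α := by rw [dataVolume, logb]; ring

end dataVolume

/-- `T` is the end `∑ j ≤ i, τ j` of the user's slot, up to which it harvests energy. -/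
def UserFeasible (W Pmax D k B C τ α T : ℝ) : Prop :=
  0 < τ ∧ 0 ≤ α ∧ D ≤ dataVolume W k τ α ∧ α ≤ τ * Pmax ∧ α ≤ B + C * T

def Feasible {N : ℕ} (W Pmax : ℝ) (D k B C τ α : Fin N → ℝ) : Prop :=
  ∀ i, UserFeasible W Pmax (D i) (k i) (B i) (C i) (τ i) (α i) (∑ j ∈ Iic i, τ j)

namespace UserFeasible

variable {W Pmax D k B C τ α T : ℝ}

lemma energy_pos (hD : 0 < D) (h : UserFeasible W Pmax D k B C τ α T) : 0 < α := by
  obtain ⟨-, hα, hdata, -⟩ := h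
  refine hα.lt_of_ne fun hα0 => ?_
  rw [← hα0, dataVolume_zero_right] at hdata
  linarith

lemma exists_shrink (hD : 0 < D) (hB : 0 ≤ B) (hC : 0 ≤ C)
    (h : UserFeasible W Pmax D k B C τ α T) (hτT : τ ≤ T) (hslack : D < dataVolume W k τ α) :
    ∃ θ, 0 < θ ∧ θ < 1 ∧
      UserFeasible W Pmax D k B C (θ * τ) (θ * α) (T - (1 - θ) * τ) := by
  obtain ⟨hτ, hα, -, hpow, heng⟩ := h
  have hV : 0 < dataVolume W k τ α := hD.trans hslack
  set θ := D / dataVolume W k τ α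
  have hθ0 : 0 < θ := div_pos hD hV
  have hθ1 : θ < 1 := (div_lt_one hV).2 hslack
  refine ⟨θ, hθ0, hθ1, mul_pos hθ0 hτ, mul_nonneg hθ0.le hα, ?_, ?_, ?_⟩
  · rw [dataVolume_mul_mul hθ0.ne', div_mul_cancel₀ _ hV.ne']
  · rw [mul_assoc]
    exact mul_le_mul_of_nonneg_left hpow hθ0.le
  · -- the saving `(1 - θ) α` covers the energy no longer harvested during `(1 - θ) τ`
    nlinarith [mul_le_mul_of_nonneg_left heng hθ0.le,
      mul_nonneg (mul_nonneg (sub_nonneg.2 hθ1.le) hC) (sub_nonneg.2 hτT),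
      mul_nonneg (sub_nonneg.2 hθ1.le) hB]

lemma lengthen (hW : 0 < W) (hPmax : 0 < Pmax) (hD : 0 < D) (hk : 0 < k)
    (h : UserFeasible W Pmax D k B C τ α T) {c : ℝ} (hc : 0 < c) :
    UserFeasible W Pmax D k B C (τ + c) α T ∧ D < dataVolume W k (τ + c) α := by
  have hα := h.energy_pos hD
  obtain ⟨hτ, -, hdata, hpow, heng⟩ := h
  have hslack : D < dataVolume W k (τ + c) α :=
    hdata.trans_lt (dataVolume_lt_dataVolume hW hk hα hτ (lt_add_of_pos_right τ hc))
  exact ⟨⟨by positivity, hα.le, hslack.le, by nlinarith, heng⟩, hslack⟩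

end UserFeasible

lemma sum_Iic_sub_single_castSucc_add_single_succ {n : ℕ} (τ : Fin (n + 1) → ℝ) (i : Fin n)
    (c : ℝ) (j : Fin (n + 1)) :
    ∑ l ∈ Iic j, (τ - Pi.single i.castSucc c + Pi.single i.succ c : Fin (n + 1) → ℝ) l
      = ∑ l ∈ Iic j, τ l - if j = i.castSucc then c else 0 := by
  simp only [Pi.add_apply, Pi.sub_apply, sum_add_distrib, sum_sub_distrib, sum_pi_single',
    mem_Iic]
  split_ifs <;> simp_all [Fin.ext_iff, Fin.le_def] <;> omega

namespace Feasible

variable {W Pmax : ℝ}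

lemma le_sum_Iic {N : ℕ} {D k B C τ α : Fin N → ℝ} (h : Feasible W Pmax D k B C τ α)
    (i : Fin N) : τ i ≤ ∑ j ∈ Iic i, τ j :=
  single_le_sum (fun j _ => (h j).1.le) (mem_Iic.2 le_rfl)

section Schedule

variable {n : ℕ} {D k B C τ α : Fin (n + 1) → ℝ}

lemma exists_sum_lt_of_slack_last (hD : ∀ i, 0 < D i) (hB : ∀ i, 0 ≤ B i) (hC : ∀ i, 0 ≤ C i)
    (h : Feasible W Pmax D k B C τ α)
    (hslack : D (Fin.last n) < dataVolume W (k (Fin.last n)) (τ (Fin.last n)) (α (Fin.last n))) :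
    ∃ τ' α', Feasible W Pmax D k B C τ' α' ∧ ∑ j, τ' j < ∑ j, τ j := by
  obtain ⟨θ, hθ0, hθ1, hlast⟩ := (h (Fin.last n)).exists_shrink (hD _) (hB _) (hC _)
    (h.le_sum_Iic _) hslack
  set c := (1 - θ) * τ (Fin.last n)
  refine ⟨τ - Pi.single (Fin.last n) c, Function.update α (Fin.last n) (θ * α (Fin.last n)),
    fun j => ?_, ?_⟩
  · rcases eq_or_ne j (Fin.last n) with rfl | hj
    · convert hlast using 2 <;> simp [c, sum_sub_distrib]
      ring
    · have hlt : ¬ Fin.last n ≤ j := fun hle => hj (Fin.last_le_iff.1 hle)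
      simpa [hj, sum_sub_distrib, hlt] using h j
  · have hc : 0 < c := mul_pos (sub_pos.2 hθ1) (h _).1
    simpa [sum_sub_distrib] using hc

lemma exists_slack_succ (hW : 0 < W) (hPmax : 0 < Pmax) (hD : ∀ i, 0 < D i)
    (hk : ∀ i, 0 < k i) (hB : ∀ i, 0 ≤ B i) (hC : ∀ i, 0 ≤ C i)
    (h : Feasible W Pmax D k B C τ α) (i : Fin n)
    (hslack : D i.castSucc < dataVolume W (k i.castSucc) (τ i.castSucc) (α i.castSucc)) :
    ∃ τ' α', Feasible W Pmax D k B C τ' α' ∧ ∑ j, τ' j = ∑ j, τ j ∧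
      D i.succ < dataVolume W (k i.succ) (τ' i.succ) (α' i.succ) := by
  obtain ⟨θ, hθ0, hθ1, hshrunk⟩ := (h i.castSucc).exists_shrink (hD _) (hB _) (hC _)
    (h.le_sum_Iic _) hslack
  set c := (1 - θ) * τ i.castSucc
  obtain ⟨hlengthened, hslack'⟩ :=
    (h i.succ).lengthen hW hPmax (hD _) (hk _) (mul_pos (sub_pos.2 hθ1) (h _).1)
  have hne : i.succ ≠ i.castSucc := Fin.castSucc_lt_succ.ne'
  refine ⟨τ - Pi.single i.castSucc c + Pi.single i.succ c,
    Function.update α i.castSucc (θ * α i.castSucc), fun j => ?_, ?_, ?_⟩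
  · rw [sum_Iic_sub_single_castSucc_add_single_succ]
    rcases eq_or_ne j i.castSucc with rfl | hj
    · convert hshrunk using 2 <;> simp [c, hne.symm]
      ring
    rcases eq_or_ne j i.succ with rfl | hj'
    · simpa [hne] using hlengthened
    · simpa [hj, hj'] using h j
  · simp [sum_add_distrib, sum_sub_distrib]
  · simpa [hne] using hslack'

end Schedule

lemma exists_sum_lt_of_slack {N : ℕ} {D k B C τ α : Fin N → ℝ} (hW : 0 < W)
    (hPmax : 0 < Pmax) (hD : ∀ i, 0 < D i) (hk : ∀ i, 0 < k i) (hB : ∀ i, 0 ≤ B i)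
    (hC : ∀ i, 0 ≤ C i) (h : Feasible W Pmax D k B C τ α) (i : Fin N)
    (hslack : D i < dataVolume W (k i) (τ i) (α i)) :
    ∃ τ' α', Feasible W Pmax D k B C τ' α' ∧ ∑ j, τ' j < ∑ j, τ j := by
  cases N with
  | zero => exact i.elim0
  | succ n =>
    induction i using Fin.reverseInduction generalizing τ α with
    | last => exact exists_sum_lt_of_slack_last hD hB hC h hslack
    | cast i ih =>
      obtain ⟨τ', α', h', hsum, hslack'⟩ := exists_slack_succ hW hPmax hD hk hB hC h i hslack
      obtain ⟨τ'', α'', h'', hlt⟩ := ih h' hslack'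
      exact ⟨τ'', α'', h'', hsum ▸ hlt⟩

end Feasible

theorem data_constraint_tight_at_optimum_general (N : ℕ) (W Pmax : ℝ)
    (hW : 0 < W) (hPmax : 0 < Pmax)
    (D k B C : Fin N → ℝ)
    (hD : ∀ i, 0 < D i) (hk : ∀ i, 0 < k i) (hB : ∀ i, 0 ≤ B i) (hC : ∀ i, 0 ≤ C i)
    (F : Set ((Fin N → ℝ) × (Fin N → ℝ)))
    (hF : F = {p | ∀ i : Fin N,
        0 < p.1 i ∧ 0 ≤ p.2 i ∧
        D i ≤ W * p.1 i * Real.logb 2 (1 + k i * p.2 i / p.1 i) ∧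
        p.2 i ≤ p.1 i * Pmax ∧
        p.2 i ≤ B i + C i * ∑ j ∈ Finset.Iic i, p.1 j})
    (τs αs : Fin N → ℝ) (hmem : (τs, αs) ∈ F)
    (hopt : ∀ p ∈ F, ∑ i, τs i ≤ ∑ i, p.1 i) :
    ∀ i : Fin N, W * τs i * Real.logb 2 (1 + k i * αs i / τs i) = D i := by
  subst hF
  have hfeas : Feasible W Pmax D k B C τs αs := hmem
  intro i
  refine le_antisymm (not_lt.1 fun hslack => ?_) (hfeas i).2.2.1
  obtain ⟨τ', α', hfeas', hlt⟩ :=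
    hfeas.exists_sum_lt_of_slack hW hPmax hD hk hB hC i hslack
  exact (hopt (τ', α') hfeas').not_gt hlt

/-- Lemma 2 (data constraints are tight at the optimum): in the power control and
time allocation problem `PCP`, assuming the feasible set contains a Slater point,
any minimizer of the schedule length satisfies every data constraint with equality. -/
theorem data_constraint_tight_at_optimum (N : ℕ) (W Pmax : ℝ)
    (hW : 0 < W) (hPmax : 0 < Pmax)
    (D k B C : Fin N → ℝ)
    (hD : ∀ i, 0 < D i) (hk : ∀ i, 0 < k i) (hB : ∀ i, 0 ≤ B i) (hC : ∀ i, 0 ≤ C i)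
    (F : Set ((Fin N → ℝ) × (Fin N → ℝ)))
    (hF : F = {p | ∀ i : Fin N,
        0 < p.1 i ∧ 0 ≤ p.2 i ∧
        D i ≤ W * p.1 i * Real.logb 2 (1 + k i * p.2 i / p.1 i) ∧
        p.2 i ≤ p.1 i * Pmax ∧
        p.2 i ≤ B i + C i * ∑ j ∈ Finset.Iic i, p.1 j})
    (hSlater : ∃ p ∈ F, ∀ i : Fin N,
        D i < W * p.1 i * Real.logb 2 (1 + k i * p.2 i / p.1 i) ∧
        p.2 i < p.1 i * Pmax ∧
        p.2 i < B i + C i * ∑ j ∈ Finset.Iic i, p.1 j)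
    (τs αs : Fin N → ℝ) (hmem : (τs, αs) ∈ F)
    (hopt : ∀ p ∈ F, ∑ i, τs i ≤ ∑ i, p.1 i) :
    ∀ i : Fin N, W * τs i * Real.logb 2 (1 + k i * αs i / τs i) = D i :=
  data_constraint_tight_at_optimum_general N W Pmax hW hPmax D k B C hD hk hB hC F hF τs αs hmem
    hopt
end

section
/- For constants W > 0, k > 0, ε > 0, C > 0 and D > 0, there exists a unique τ > 0 satisfying W·τ·logb 2 (1 + k·(ε + C·τ)/τ) = D, i.e., the system formed by the tight data constraint and the tight energy causality constraint (used in Theorem 1 to define the optimal transmission time) has exactly one positive solution. -/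
/-!
With `c = 1 + k C` and `b = k ε` the delivered bits are `W / log 2 · τ log (c + b / τ)`.
On `(0, ∞)` this function of `τ` is continuous and strictly increasing (two applications of
`log x ≤ x - 1`, using `c > 1`), tends to `0` as `τ → 0⁺` because `τ log τ` does, and grows at
least like `τ log c`. The intermediate value theorem gives a solution, strict monotonicity its
uniqueness.
-/

open Real Set Filter Topology

theorem existsUnique_eq_of_strictMonoOn_Ioi {α δ : Type*} [ConditionallyCompleteLinearOrder α]
    [TopologicalSpace α] [OrderTopology α] [DenselyOrdered α] [NoMaxOrder α]
    [LinearOrder δ] [TopologicalSpace δ] [OrderTopology δ] {f : α → δ} {a : α} {L D : δ}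
    (hmono : StrictMonoOn f (Ioi a)) (hcont : ContinuousOn f (Ioi a))
    (hleft : Tendsto f (𝓝[>] a) (𝓝 L)) (htop : Tendsto f atTop atTop) (hD : L < D) :
    ∃! x, a < x ∧ f x = D := by
  obtain ⟨s, hsD, hs⟩ := ((hleft.eventually (gt_mem_nhds hD)).and self_mem_nhdsWithin).exists
  obtain ⟨t, ht, htD⟩ := ((eventually_gt_atTop a).and (htop.eventually_ge_atTop D)).exists
  obtain ⟨x, hx, hxD⟩ := hcont.surjOn_Icc hs ht ⟨hsD.le, htD⟩
  exact ⟨x, ⟨hx, hxD⟩, fun y hy => hmono.injOn hy.1 hx (hy.2.trans hxD.symm)⟩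

theorem strictMonoOn_mul_log_add_div {b c : ℝ} (hc : 1 < c) (hb : 0 ≤ b) :
    StrictMonoOn (fun τ => τ * log (c + b / τ)) (Ioi 0) := by
  intro s (hs : 0 < s) t (ht : 0 < t) hst
  set u := c + b / s
  set v := c + b / t
  have hv : c ≤ v := le_add_of_nonneg_right (by positivity)
  have hv₀ : 0 < v := by linarith
  have hlog_div : log u - log v ≤ u / v - 1 := by
    rw [← log_div (by positivity) hv₀.ne']
    exact log_le_sub_one_of_pos (by positivity)
  have hgap : s * (u / v - 1) = (t - s) * ((v - c) / v) := by
    simp only [u, v]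
    field_simp
    ring
  have hslope : (v - c) / v < log v := by
    refine lt_of_lt_of_le ?_ (one_sub_inv_le_log_of_pos hv₀)
    rw [div_lt_iff₀ hv₀, sub_mul, inv_mul_cancel₀ hv₀.ne']
    linarith
  calc s * log u ≤ s * log v + s * (u / v - 1) := by
        linarith [mul_le_mul_of_nonneg_left hlog_div hs.le]
    _ = s * log v + (t - s) * ((v - c) / v) := by rw [hgap]
    _ < s * log v + (t - s) * log v := by gcongr
    _ = t * log v := by ring

theorem continuousOn_mul_log_add_div {b c : ℝ} (hc : 0 ≤ c) (hb : 0 < b) :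
    ContinuousOn (fun τ => τ * log (c + b / τ)) (Ioi 0) := by
  have hinner : ContinuousOn (fun τ => c + b / τ) (Ioi 0) :=
    continuousOn_const.add (continuousOn_const.div continuousOn_id fun _ hτ => ne_of_gt hτ)
  exact continuousOn_id.mul (hinner.log fun τ (hτ : 0 < τ) => by positivity)

theorem tendsto_mul_log_add_div_nhdsGT_zero {b c : ℝ} (hc : 0 ≤ c) (hb : 0 < b) :
    Tendsto (fun τ => τ * log (c + b / τ)) (𝓝[>] 0) (𝓝 0) := by
  have hcont : ContinuousAt (fun τ => τ * log (c * τ + b) - τ * log τ) 0 := by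
    have : ContinuousAt (fun τ => log (c * τ + b)) 0 :=
      (continuousAt_log (by simpa using hb.ne')).comp (by fun_prop)
    exact (continuousAt_id.mul this).sub continuous_mul_log.continuousAt
  have hlim := hcont.tendsto.mono_left (nhdsWithin_le_nhds (s := Ioi 0))
  simp only [zero_mul, sub_zero] at hlim
  refine hlim.congr' (eventually_nhdsWithin_of_forall fun τ (hτ : 0 < τ) => ?_)
  rw [← mul_sub, ← log_div (by positivity) hτ.ne']
  congr 2
  field_simp

theorem tendsto_mul_log_add_div_atTop {b c : ℝ} (hc : 1 < c) (hb : 0 ≤ b) :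
    Tendsto (fun τ => τ * log (c + b / τ)) atTop atTop := by
  refine tendsto_atTop_mono' _ ?_ (tendsto_id.atTop_mul_const (log_pos hc))
  filter_upwards [eventually_gt_atTop 0] with τ hτ
  exact mul_le_mul_of_nonneg_left
    (log_le_log (by positivity) (le_add_of_nonneg_right (by positivity))) hτ.le

theorem mul_logb_two_eq {W k ε C τ : ℝ} (hτ : τ ≠ 0) :
    W * τ * logb 2 (1 + k * (ε + C * τ) / τ) =
      W / log 2 * (τ * log (1 + k * C + k * ε / τ)) := by
  rw [logb, show 1 + k * (ε + C * τ) / τ = 1 + k * C + k * ε / τ by field_simp; ring]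
  ring

/-- For constants `W > 0`, `k > 0`, `ε > 0`, `C > 0` and `D > 0`, there is a unique
`τ > 0` with `W·τ·logb 2 (1 + k·(ε + C·τ)/τ) = D`: the system of the tight data
constraint and the tight energy causality constraint has exactly one positive
solution. -/
theorem unique_positive_transmission_time (W k ε C D : ℝ)
    (hW : 0 < W) (hk : 0 < k) (hε : 0 < ε) (hC : 0 < C) (hD : 0 < D) :
    ∃! τ : ℝ, 0 < τ ∧ W * τ * Real.logb 2 (1 + k * (ε + C * τ) / τ) = D := by
  have hc : 1 < 1 + k * C := lt_add_of_pos_right 1 (mul_pos hk hC)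
  have hb : 0 < k * ε := mul_pos hk hε
  have hscale : 0 < W / log 2 := div_pos hW (log_pos one_lt_two)
  have hiff : ∀ τ, (0 < τ ∧ τ * log (1 + k * C + k * ε / τ) = D / (W / log 2)) ↔
      (0 < τ ∧ W * τ * logb 2 (1 + k * (ε + C * τ) / τ) = D) := by
    refine fun τ => and_congr_right fun hτ => ?_
    rw [mul_logb_two_eq hτ.ne', eq_div_iff hscale.ne', mul_comm]
  exact (existsUnique_congr hiff).1 (existsUnique_eq_of_strictMonoOn_Ioi
    (strictMonoOn_mul_log_add_div hc hb.le) (continuousOn_mul_log_add_div (by linarith) hb)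
    (tendsto_mul_log_add_div_nhdsGT_zero (by linarith) hb)
    (tendsto_mul_log_add_div_atTop hc hb.le) (div_pos hD hscale))
end

section
/- For constants k > 0 and C ≥ 0, the function h(P) = (P − C) / logb 2 (1 + k·P) is strictly increasing on (0, ∞). (Consequently, the net energy (P − C)·τ(P) drawn from a user's accumulated energy when transmitting D bits at power P over time τ(P) = D/(W·logb 2 (1+kP)) while harvesting at rate C is strictly increasing in P.) -/
/-!
Write `(P - C) / logb 2 (1 + k P)` as `P / logb 2 (1 + k P) - C / logb 2 (1 + k P)`. The first
term is strictly increasing because `log` is strictly concave, so its secant slopes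
`log (1 + x) / x` through `1` decrease; the second is nonincreasing because `C ≥ 0` and the
logarithm is positive and increasing.
-/

open Real Set

theorem StrictMonoOn.sub_const_div {𝕜 : Type*} [Field 𝕜] [LinearOrder 𝕜] [IsStrictOrderedRing 𝕜]
    {L : 𝕜 → 𝕜} {s : Set 𝕜} {C : 𝕜} (h : StrictMonoOn (fun x => x / L x) s) (hC : 0 ≤ C)
    (hL_pos : ∀ x ∈ s, 0 < L x) (hL : MonotoneOn L s) :
    StrictMonoOn (fun x => (x - C) / L x) s := by
  intro x hx y hy hxy
  have hCy : C / L y ≤ C / L x := div_le_div_of_nonneg_left hC (hL_pos x hx) (hL hx hy hxy.le)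
  simp only [sub_div]
  linarith [h hx hy hxy]

theorem strictMonoOn_div_log_one_add : StrictMonoOn (fun x : ℝ => x / log (1 + x)) (Ioi 0) := by
  intro x (hx : 0 < x) y (hy : 0 < y) hxy
  have hslope : log (1 + y) / y < log (1 + x) / x := by
    simpa using strictConcaveOn_log_Ioi.secant_strict_mono (a := 1) (x := 1 + x) (y := 1 + y)
      (mem_Ioi.2 one_pos) (mem_Ioi.2 (by linarith)) (mem_Ioi.2 (by linarith))
      (by linarith) (by linarith) (by linarith)
  have hpos : 0 < log (1 + y) / y := div_pos (log_pos (by linarith)) hy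
  simp only [← inv_div (log _)]
  exact (inv_lt_inv₀ (hpos.trans hslope) hpos).2 hslope

theorem strictMonoOn_div_logb_one_add_mul {b k : ℝ} (hb : 1 < b) (hk : 0 < k) :
    StrictMonoOn (fun x : ℝ => x / logb b (1 + k * x)) (Ioi 0) := by
  have hrescale : ∀ x, x / logb b (1 + k * x) = log b / k * (k * x / log (1 + k * x)) := by
    intro x
    rw [logb, div_div_eq_mul_div]
    field_simp
  intro x (hx : 0 < x) y (hy : 0 < y) hxy
  simp only [hrescale]
  exact mul_lt_mul_of_pos_left
    (strictMonoOn_div_log_one_add (mul_pos hk hx) (mul_pos hk hy) (by gcongr))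
    (div_pos (log_pos hb) hk)

/-- For constants `k > 0` and `C ≥ 0`, the function
`h(P) = (P − C) / logb 2 (1 + k·P)` is strictly increasing on `(0, ∞)`: the net
energy drawn from a user's accumulated energy when transmitting a fixed amount of
data at power `P` while harvesting at rate `C` is strictly increasing in `P`. -/
theorem net_drain_strictMonoOn (k C : ℝ) (hk : 0 < k) (hC : 0 ≤ C) :
    StrictMonoOn (fun P : ℝ => (P - C) / Real.logb 2 (1 + k * P)) (Set.Ioi 0) := by
  have hlt : ∀ P ∈ Ioi (0 : ℝ), 1 < 1 + k * P := fun _ hP => lt_add_of_pos_right 1 (mul_pos hk hP)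
  refine (strictMonoOn_div_logb_one_add_mul one_lt_two hk).sub_const_div hC
    (fun P hP => logb_pos one_lt_two (hlt P hP)) ?_
  intro P hP Q _ hPQ
  exact logb_le_logb_of_le one_lt_two (by linarith [hlt P hP]) (by gcongr)
end

section
/- (Lemma 4: the penalty function is non-increasing in the start time.) Let W > 0, k > 0, D > 0, B ≥ 0, C ≥ 0 and Pmax > 0. Suppose 0 ≤ s₁ ≤ s₂ and P₁ > 0, P₂ > 0 satisfy (P₁ − C)·D/(W·logb 2 (1 + k·P₁)) = B + C·s₁ and (P₂ − C)·D/(W·logb 2 (1 + k·P₂)) = B + C·s₂ (i.e., P_j is the transmit power that exactly exhausts the energy available to a user starting its transmission at time s_j). Then P₁ ≤ P₂, and consequently the corresponding transmission times satisfy D/(W·logb 2 (1 + k·min(Pmax, P₂))) ≤ D/(W·logb 2 (1 + k·min(Pmax, P₁))); equivalently, the penalty ρ(s) = τ(s) − t_min, where τ(s) is the transmission time when starting at time s with the optimal power min(Pmax, P*(s)) and t_min = D/(W·logb 2 (1 + k·Pmax)), is non-increasing in s. -/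
/-!
The energy balance reads `E(P) = B + C s` with `E(P) = (P - C) τ(P)`, a positive multiple of
`(P - C) / log (1 + k P)`. By concavity of `log`, the secant slope `log (1 + k P) / P` decreases,
so `P / log (1 + k P)` increases; and for `C ≥ 0` the term `-C / log (1 + k P)` increases too.
Hence `E` is strictly increasing on `P > 0`, so a later start (more harvested energy) forces
a larger power, and `τ`, being antitone, yields a shorter transmission at `min Pmax P`.
-/

open Real Set

lemma log_one_add_mul_pos {k x : ℝ} (hk : 0 < k) (hx : 0 < x) : 0 < log (1 + k * x) :=
  log_pos (lt_add_of_pos_right 1 (mul_pos hk hx))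

lemma strictAntiOn_log_one_add_mul_div {k : ℝ} (hk : 0 < k) :
    StrictAntiOn (fun x => log (1 + k * x) / x) (Ioi 0) := by
  intro a (ha : 0 < a) b (hb : 0 < b) hab
  have hmem : ∀ x : ℝ, 0 < x → 1 + k * x ∈ Ioi (0 : ℝ) := fun x hx => by
    simp only [mem_Ioi]; positivity
  have hne : ∀ x : ℝ, 0 < x → 1 + k * x ≠ 1 := fun x hx => by
    simp only [ne_eq, add_eq_left]; positivity
  have hsecant := strictConcaveOn_log_Ioi.secant_strict_mono (mem_Ioi.2 one_pos)
    (hmem a ha) (hmem b hb) (hne a ha) (hne b hb) (by gcongr)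
  simp only [log_one, sub_zero, add_sub_cancel_left, div_mul_eq_div_div_swap] at hsecant
  exact (div_lt_div_iff_of_pos_right hk).1 hsecant

lemma strictMonoOn_sub_div_log_one_add_mul {k C : ℝ} (hk : 0 < k) (hC : 0 ≤ C) :
    StrictMonoOn (fun P => (P - C) / log (1 + k * P)) (Ioi 0) := by
  intro a (ha : 0 < a) b (hb : 0 < b) hab
  have hslope : a * log (1 + k * b) < b * log (1 + k * a) := by
    have := strictAntiOn_log_one_add_mul_div hk ha hb hab
    rwa [div_lt_div_iff₀ hb ha, mul_comm, mul_comm (log _)] at this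
  have hlog_mono : log (1 + k * a) ≤ log (1 + k * b) := by gcongr
  show (a - C) / log (1 + k * a) < (b - C) / log (1 + k * b)
  rw [div_lt_div_iff₀ (log_one_add_mul_pos hk ha) (log_one_add_mul_pos hk hb)]
  nlinarith [mul_le_mul_of_nonneg_left hlog_mono hC]

noncomputable def transmissionTime (W k D P : ℝ) : ℝ :=
  D / (W * logb 2 (1 + k * P))

lemma transmissionTime_eq (W k D P : ℝ) :
    transmissionTime W k D P = D * log 2 / W / log (1 + k * P) := by
  rw [transmissionTime, logb, div_div, mul_div_assoc', div_div_eq_mul_div, mul_comm W]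

lemma transmissionTime_antitoneOn {W k D : ℝ} (hW : 0 < W) (hk : 0 < k) (hD : 0 ≤ D) :
    AntitoneOn (transmissionTime W k D) (Ioi 0) := by
  intro a (ha : 0 < a) b _ hab
  simp only [transmissionTime_eq]
  have := log_one_add_mul_pos hk ha
  gcongr

lemma strictMonoOn_sub_mul_transmissionTime {W k D C : ℝ} (hW : 0 < W) (hk : 0 < k)
    (hD : 0 < D) (hC : 0 ≤ C) :
    StrictMonoOn (fun P => (P - C) * transmissionTime W k D P) (Ioi 0) := by
  intro a ha b hb hab
  have hscale : ∀ P, (P - C) * transmissionTime W k D P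
      = D * log 2 / W * ((P - C) / log (1 + k * P)) := fun P => by
    rw [transmissionTime_eq]; ring
  simp only [hscale]
  exact mul_lt_mul_of_pos_left (strictMonoOn_sub_div_log_one_add_mul hk hC ha hb hab)
    (by positivity)

theorem penalty_nonincreasing_general (W k D B C Pmax s₁ s₂ P₁ P₂ : ℝ)
    (hW : 0 < W) (hk : 0 < k) (hD : 0 < D) (hC : 0 ≤ C)
    (hPmax : 0 < Pmax) (hs : s₁ ≤ s₂)
    (hP₁ : 0 < P₁) (hP₂ : 0 < P₂)
    (h₁ : (P₁ - C) * (D / (W * Real.logb 2 (1 + k * P₁))) = B + C * s₁)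
    (h₂ : (P₂ - C) * (D / (W * Real.logb 2 (1 + k * P₂))) = B + C * s₂) :
    P₁ ≤ P₂ ∧
      D / (W * Real.logb 2 (1 + k * min Pmax P₂))
        ≤ D / (W * Real.logb 2 (1 + k * min Pmax P₁)) := by
  have hP : P₁ ≤ P₂ := by
    refine ((strictMonoOn_sub_mul_transmissionTime hW hk hD hC).le_iff_le hP₁ hP₂).1 ?_
    change (P₁ - C) * (D / (W * logb 2 (1 + k * P₁)))
      ≤ (P₂ - C) * (D / (W * logb 2 (1 + k * P₂)))
    rw [h₁, h₂]
    gcongr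
  exact ⟨hP, transmissionTime_antitoneOn hW hk hD.le (lt_min hPmax hP₁) (lt_min hPmax hP₂)
    (min_le_min_left Pmax hP)⟩

/-- Lemma 4 (the penalty function is non-increasing in the start time): if `P₁` and
`P₂` are the transmit powers that exactly exhaust the energy available to a user
starting its transmission at times `s₁ ≤ s₂` respectively, then `P₁ ≤ P₂`, and the
corresponding transmission times at the optimal powers `min(Pmax, Pⱼ)` satisfy
`τ(s₂) ≤ τ(s₁)`; equivalently the penalty `ρ(s) = τ(s) − t_min` is non-increasing. -/
theorem penalty_nonincreasing (W k D B C Pmax s₁ s₂ P₁ P₂ : ℝ)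
    (hW : 0 < W) (hk : 0 < k) (hD : 0 < D) (hB : 0 ≤ B) (hC : 0 ≤ C)
    (hPmax : 0 < Pmax) (hs₁ : 0 ≤ s₁) (hs : s₁ ≤ s₂)
    (hP₁ : 0 < P₁) (hP₂ : 0 < P₂)
    (h₁ : (P₁ - C) * (D / (W * Real.logb 2 (1 + k * P₁))) = B + C * s₁)
    (h₂ : (P₂ - C) * (D / (W * Real.logb 2 (1 + k * P₂))) = B + C * s₂) :
    P₁ ≤ P₂ ∧
      D / (W * Real.logb 2 (1 + k * min Pmax P₂))
        ≤ D / (W * Real.logb 2 (1 + k * min Pmax P₁)) :=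
  penalty_nonincreasing_general W k D B C Pmax s₁ s₂ P₁ P₂ hW hk hD hC hPmax hs hP₁ hP₂ h₁ h₂
end

section
/- (Theorem 2 and Corollary 2, abstract form: a zero-penalty user may be scheduled first.) Let ι be a finite index set and for each i ∈ ι let e_i : ℝ → ℝ be monotone non-decreasing with e_i(s) ≥ s for all s and with non-increasing slack s ↦ e_i(s) − s. For a list L of elements of ι and a start time t, define the completion time F(L, t) by F([], t) = t and F(i :: L', t) = F(L', e_i(t)). Suppose m ∈ ι is a user with constant slack, i.e., there is c ≥ 0 with e_m(s) = s + c for all s (its penalty is identically zero: its transmission time always equals its minimum possible value). Then for every list L that is a permutation of ι (so m occurs in L exactly once) and every start time t: F(m :: (L.erase m), t) ≤ F(L, t). In particular (t = 0), there exists an optimal minimum-length schedule in which user m is scheduled first. -/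
/-!
Write `F(L, t)` for the completion time of the schedule `L` started at `t`. The slack
`F(L, t) - t` of a whole schedule is non-increasing in `t`, being a sum of the slacks of its
users evaluated at non-decreasing start times. Write a schedule containing `m` as `A ++ m :: B`.
Moving `m` to the front delays `A` by `c`, so `A` finishes at `F(A, t + c) ≤ F(A, t) + c`,
which is exactly when `m` ends in the original schedule; `B` then starts no later.
-/

theorem antitone_foldl_sub {ι : Type*} (e : ι → ℝ → ℝ) (hmono : ∀ i, Monotone (e i))
    (hslack : ∀ i, Antitone fun s => e i s - s) :
    ∀ L : List ι, Antitone fun t => L.foldl (fun t i => e i t) t - t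
  | [] => by simpa using antitone_const
  | i :: L => by
    have hsplit : (fun t => (i :: L).foldl (fun t i => e i t) t - t) =
        fun t => (L.foldl (fun t i => e i t) (e i t) - e i t) + (e i t - t) := by
      funext t; simp only [List.foldl_cons]; ring
    rw [hsplit]
    exact ((antitone_foldl_sub e hmono hslack L).comp_monotone (hmono i)).add (hslack i)

theorem foldl_add_le {ι : Type*} (e : ι → ℝ → ℝ) (hmono : ∀ i, Monotone (e i))
    (hslack : ∀ i, Antitone fun s => e i s - s) (L : List ι) (t : ℝ) {c : ℝ} (hc : 0 ≤ c) :
    L.foldl (fun t i => e i t) (t + c) ≤ L.foldl (fun t i => e i t) t + c := by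
  have := antitone_foldl_sub e hmono hslack L (le_add_of_nonneg_right hc : t ≤ t + c)
  simp only at this
  linarith

theorem zero_penalty_user_first_general {ι : Type*} [DecidableEq ι]
    (e : ι → ℝ → ℝ)
    (hmono : ∀ i, Monotone (e i))
    (hslack : ∀ i, Antitone fun s => e i s - s)
    (m : ι) (c : ℝ) (hc : 0 ≤ c) (hm : ∀ s, e m s = s + c) :
    ∀ (L : List ι), L.Nodup → (∀ i : ι, i ∈ L) →
      ∀ t : ℝ,
        (m :: L.erase m).foldl (fun t i => e i t) t ≤
          L.foldl (fun t i => e i t) t := by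
  intro L _ hall t
  obtain ⟨A, B, -, rfl, herase⟩ := List.exists_erase_eq (hall m)
  rw [herase]
  simp only [List.foldl_cons, List.foldl_append, hm]
  exact List.foldl_monotone (fun i => hmono i) B (foldl_add_le e hmono hslack A t hc)

/-- Theorem 2 and Corollary 2, abstract form: if user `m` has constant slack
`e_m s = s + c` with `c ≥ 0` (zero penalty at all times), then for any schedule
`L` (a permutation of all users) and any start time `t`, scheduling `m` first
does not increase the completion time: `F(m :: L.erase m, t) ≤ F(L, t)`, where
`F(L, t) = L.foldl (fun t i => e i t) t`. In particular there is an optimal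
minimum-length schedule in which user `m` is scheduled first. -/
theorem zero_penalty_user_first {ι : Type*} [Fintype ι] [DecidableEq ι]
    (e : ι → ℝ → ℝ)
    (hmono : ∀ i, Monotone (e i)) (hge : ∀ i s, s ≤ e i s)
    (hslack : ∀ i, Antitone fun s => e i s - s)
    (m : ι) (c : ℝ) (hc : 0 ≤ c) (hm : ∀ s, e m s = s + c) :
    ∀ (L : List ι), L.Nodup → (∀ i : ι, i ∈ L) →
      ∀ t : ℝ,
        (m :: L.erase m).foldl (fun t i => e i t) t ≤
          L.foldl (fun t i => e i t) t :=
  zero_penalty_user_first_general e hmono hslack m c hc hm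
end
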